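/- arXiv:2112.05849 — 2 statements merged into one kernel-verified Lean document; each statement's English description precedes it below -/
import Mathlib

section
/- Let f be an orientation-preserving circle homeomorphism with irrational rotation number ρ whose convergent denominators are q_k. Then for each k, the iterate f^{q_k} is a closest return: for every x ∈ 𝕋 and every 0 < j < q_k, the point f^j(x) does not lie in the closed arc between x and f^{q_k}(x) not containing f^{q_{k+1}}(x). -/
open Filter Topology

/-- The Gauss map `G(x) = {1/x}`. -/
noncomputable def gauss (x : ℝ) : ℝ := Int.fract x⁻¹

/-- The closed arc on the circle `ℝ/ℤ` from `a` to `b` in the positive direction. -/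
def posArc (a b : AddCircle (1:ℝ)) : Set (AddCircle (1:ℝ)) :=
  {c | ∃ s t : ℝ, 0 ≤ s ∧ s ≤ t ∧ t < 1 ∧
    ((s : ℝ) : AddCircle (1:ℝ)) = c - a ∧ ((t : ℝ) : AddCircle (1:ℝ)) = b - a}

/-!
Because `ρ` is irrational, every orbit of `f` is ordered on the circle exactly like the orbit
of `0` under the rotation by `ρ`: for a lift `F`, `F^[n] y - F^[m] y < ℓ` holds iff
`(n - m) ρ < ℓ`, since the translation number of `F^[d]` is `d ρ ∉ ℤ`. This reduces the claim
to the rotation, where `f^[q_k] x` sits at `δ_k = q_k ρ - p_k`. The errors `δ_k` alternate in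
sign and satisfy `|δ_k| + |δ_{k+1}| < 1`, so the arc between `0` and `δ_k` avoiding `δ_{k+1}` is
the short one, of length `|δ_k|`; and by the best-approximation property of convergents
`|δ_k| < |j ρ - m|` for `0 < j < q_k`, so no `j ρ` lies on it.
-/

local notation "𝕋" => AddCircle (1 : ℝ)

local notation "τ" => CircleDeg1Lift.translationNumber

theorem mem_posArc_coe_iff (u v w : ℝ) :
    (w : 𝕋) ∈ posArc u v ↔ Int.fract (w - u) ≤ Int.fract (v - u) := by
  have hrep : ∀ s r : ℝ, 0 ≤ s → s < 1 → ((s : 𝕋) = r - u ↔ s = Int.fract (r - u)) := by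
    intro s r hs₀ hs₁
    rw [← AddCircle.coe_sub, ← AddCircle.coe_fract (r - u)]
    exact AddCircle.coe_eq_coe_iff_of_mem_Ico (a := 0) ⟨hs₀, by simpa using hs₁⟩
      ⟨Int.fract_nonneg _, by simpa using Int.fract_lt_one _⟩
  constructor
  · rintro ⟨s, t, hs, hst, ht, hsw, htv⟩
    rw [hrep s w hs (hst.trans_lt ht)] at hsw
    rw [hrep t v (hs.trans hst) ht] at htv
    exact hsw ▸ htv ▸ hst
  · intro h
    exact ⟨_, _, Int.fract_nonneg _, h, Int.fract_lt_one _,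
      (hrep _ _ (Int.fract_nonneg _) (Int.fract_lt_one _)).2 rfl,
      (hrep _ _ (Int.fract_nonneg _) (Int.fract_lt_one _)).2 rfl⟩

theorem coe_notMem_posArc_of_abs_lt {δ ε θ : ℝ} (hδε : δ * ε < 0) (hsum : |δ| + |ε| < 1)
    (hθ : ∀ m : ℤ, |δ| < |θ - m|) {A : Set 𝕋} (hA : A = posArc 0 δ ∨ A = posArc δ 0)
    (hε : (ε : 𝕋) ∉ A) : (θ : 𝕋) ∉ A := by
  rw [← QuotientAddGroup.mk_zero] at hA
  -- For each sign of `δ`, one of the two arcs is the short one, which misses `θ`, and the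
  -- other is the long one, which contains `ε`.
  rcases mul_neg_iff.1 hδε with ⟨hδ, hε'⟩ | ⟨hδ, hε'⟩
  · rw [abs_of_pos hδ, abs_of_neg hε'] at hsum
    rw [abs_of_pos hδ] at hθ
    rcases hA with rfl | rfl <;> simp only [mem_posArc_coe_iff, sub_zero, zero_sub, not_le] at hε ⊢
    · rw [Int.fract_eq_self.2 ⟨hδ.le, by linarith⟩]
      simpa [abs_of_nonneg (Int.fract_nonneg θ)] using hθ ⌊θ⌋
    · rw [(Int.fract_eq_iff (b := 1 - δ)).2 ⟨by linarith, by linarith, -1, by push_cast; ring⟩,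
        (Int.fract_eq_iff (b := ε - δ + 1)).2 ⟨by linarith, by linarith, -1, by push_cast; ring⟩]
        at hε
      linarith
  · rw [abs_of_neg hδ, abs_of_pos hε'] at hsum
    rw [abs_of_neg hδ] at hθ
    rcases hA with rfl | rfl <;> simp only [mem_posArc_coe_iff, sub_zero, zero_sub, not_le] at hε ⊢
    · rw [Int.fract_eq_self.2 ⟨hε'.le, by linarith⟩,
        (Int.fract_eq_iff (b := δ + 1)).2 ⟨by linarith, by linarith, -1, by push_cast; ring⟩] at hε
      linarith
    · rw [Int.fract_eq_self.2 ⟨by linarith, by linarith⟩]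
      by_contra! hle
      have hm := hθ ⌊θ - δ⌋
      have h₀ := Int.fract_nonneg (θ - δ)
      rw [Int.fract] at hle h₀
      rw [abs_of_nonpos (by linarith)] at hm
      linarith

namespace CircleDeg1Lift

variable (f : CircleDeg1Lift)

theorem iterate_le_add_int_iff (hf : Irrational (τ f)) (n : ℕ) (x : ℝ) (m : ℤ) :
    f^[n] x ≤ x + m ↔ n * τ f ≤ m := by
  rcases n.eq_zero_or_pos with rfl | hn
  · simp
  have hne : τ (f ^ n) ≠ m := by
    rw [translationNumber_pow]
    exact (hf.natCast_mul hn.ne').ne_int m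
  rw [← coe_pow, ← translationNumber_pow]
  exact ⟨translationNumber_le_of_le_add_int _,
    fun h => (map_lt_of_translationNumber_lt_int _ (h.lt_of_ne hne) x).le⟩

theorem add_int_le_iterate_iff (hf : Irrational (τ f)) (n : ℕ) (x : ℝ) (m : ℤ) :
    x + m ≤ f^[n] x ↔ m ≤ n * τ f := by
  rcases n.eq_zero_or_pos with rfl | hn
  · simp
  have hne : (m : ℝ) ≠ τ (f ^ n) := by
    rw [translationNumber_pow]
    exact ((hf.natCast_mul hn.ne').ne_int m).symm
  rw [← coe_pow, ← translationNumber_pow]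
  exact ⟨le_translationNumber_of_add_int_le _,
    fun h => (lt_map_of_int_lt_translationNumber _ (h.lt_of_ne hne) x).le⟩

theorem iterate_sub_iterate_le_int_iff (hf : Irrational (τ f)) (n m : ℕ) (x : ℝ) (ℓ : ℤ) :
    f^[n] x - f^[m] x ≤ ℓ ↔ n * τ f - m * τ f ≤ ℓ := by
  rcases le_total m n with h | h
  · obtain ⟨d, rfl⟩ := Nat.exists_eq_add_of_le h
    rw [add_comm m d, Function.iterate_add_apply, sub_le_iff_le_add',
      iterate_le_add_int_iff f hf]
    push_cast
    constructor <;> intro <;> linarith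
  · obtain ⟨d, rfl⟩ := Nat.exists_eq_add_of_le h
    have := add_int_le_iterate_iff f hf d (f^[n] x) (-ℓ)
    rw [add_comm n d, Function.iterate_add_apply]
    push_cast at this ⊢
    constructor
    · intro h; linarith [this.1 (by linarith)]
    · intro h; linarith [this.2 (by linarith)]

theorem int_le_iterate_sub_iterate_iff (hf : Irrational (τ f)) (n m : ℕ) (x : ℝ) (ℓ : ℤ) :
    ℓ ≤ f^[n] x - f^[m] x ↔ ℓ ≤ n * τ f - m * τ f := by
  have := iterate_sub_iterate_le_int_iff f hf m n x (-ℓ)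
  push_cast at this
  constructor
  · intro h; linarith [this.1 (by linarith)]
  · intro h; linarith [this.2 (by linarith)]

theorem floor_iterate_sub_iterate (hf : Irrational (τ f)) (n m : ℕ) (x : ℝ) :
    ⌊f^[n] x - f^[m] x⌋ = ⌊n * τ f - m * τ f⌋ :=
  le_antisymm
    (Int.le_floor.2 ((int_le_iterate_sub_iterate_iff f hf n m x _).1 (Int.floor_le _)))
    (Int.le_floor.2 ((int_le_iterate_sub_iterate_iff f hf n m x _).2 (Int.floor_le _)))

theorem fract_iterate_sub_le_iff (hf : Irrational (τ f)) (n a b : ℕ) (x : ℝ) :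
    Int.fract (f^[n] x - f^[a] x) ≤ Int.fract (f^[b] x - f^[a] x) ↔
      Int.fract (n * τ f - a * τ f) ≤ Int.fract (b * τ f - a * τ f) := by
  have := iterate_sub_iterate_le_int_iff f hf n b x
    (⌊n * τ f - a * τ f⌋ - ⌊b * τ f - a * τ f⌋)
  unfold Int.fract
  rw [floor_iterate_sub_iterate f hf, floor_iterate_sub_iterate f hf]
  push_cast at this
  constructor
  · intro h; linarith [this.1 (by linarith)]
  · intro h; linarith [this.2 (by linarith)]

end CircleDeg1Lift

theorem iterate_mem_posArc_iff {f : 𝕋 → 𝕋} (F : CircleDeg1Lift) (hF : ∀ x : ℝ, f x = F x)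
    (hirr : Irrational (τ F)) (x : 𝕋) (n a b : ℕ) :
    f^[n] x ∈ posArc (f^[a] x) (f^[b] x) ↔
      ((n * τ F : ℝ) : 𝕋) ∈ posArc (a * τ F : ℝ) (b * τ F : ℝ) := by
  obtain ⟨ξ, rfl⟩ := QuotientAddGroup.mk_surjective x
  have hsemi : Function.Semiconj ((↑) : ℝ → 𝕋) F f := fun y => (hF y).symm
  simp only [← (hsemi.iterate_right _) ξ, mem_posArc_coe_iff]
  exact F.fract_iterate_sub_le_iff hirr n a b ξ

theorem Irrational.gauss {x : ℝ} (hx : Irrational x) : Irrational (gauss x) :=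
  hx.inv.sub_intCast _

theorem gauss_mem_Ioo {x : ℝ} (hx : Irrational x) : gauss x ∈ Set.Ioo (0 : ℝ) 1 :=
  ⟨(Int.fract_nonneg _).lt_of_ne' (by simpa [gauss] using hx.gauss.ne_int 0), Int.fract_lt_one _⟩

theorem gauss_iterate_mem_Ioo {ρ : ℝ} (hirr : Irrational ρ) (hρ : ρ ∈ Set.Ioo (0 : ℝ) 1) :
    ∀ k, gauss^[k] ρ ∈ Set.Ioo (0 : ℝ) 1
  | 0 => hρ
  | k + 1 => by
    rw [Function.iterate_succ_apply']
    exact gauss_mem_Ioo (Function.Iterate.rec Irrational hirr (fun _ h => h.gauss) k)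

-- For `ρ = [0; a 0, a 1, …]`, the `k`-th convergent is `convergentNum a k / q k`, from `0 / 1`.
def convergentNum (a : ℕ → ℕ) : ℕ → ℤ
  | 0 => 0
  | 1 => 1
  | k + 2 => a (k + 1) * convergentNum a (k + 1) + convergentNum a k

def convergentError (ρ : ℝ) (a q : ℕ → ℕ) (k : ℕ) : ℝ :=
  q k * ρ - convergentNum a k

structure IsContFracDen (ρ : ℝ) (a q : ℕ → ℕ) : Prop where
  irrational : Irrational ρ
  mem_Ioo : ρ ∈ Set.Ioo (0 : ℝ) 1
  digit_eq : ∀ j, (a j : ℤ) = ⌊(gauss^[j] ρ)⁻¹⌋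
  den_zero : q 0 = 1
  den_one : q 1 = a 0
  den_add_two : ∀ k, q (k + 2) = a (k + 1) * q (k + 1) + q k

theorem den_mul_convergentNum_sub {a q : ℕ → ℕ} (h0 : q 0 = 1) (h1 : q 1 = a 0)
    (hrec : ∀ k, q (k + 2) = a (k + 1) * q (k + 1) + q k) (k : ℕ) :
    (q k : ℤ) * convergentNum a (k + 1) - q (k + 1) * convergentNum a k = (-1) ^ k := by
  induction k with
  | zero => simp [h0, h1, convergentNum]
  | succ k ih =>
    rw [hrec, convergentNum, pow_succ, ← ih]
    push_cast
    ring

namespace IsContFracDen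

variable {ρ : ℝ} {a q : ℕ → ℕ}

theorem gauss_iterate_succ (h : IsContFracDen ρ a q) (k : ℕ) :
    gauss^[k + 1] ρ = (gauss^[k] ρ)⁻¹ - a k := by
  rw [Function.iterate_succ_apply', gauss, ← Int.self_sub_floor, ← h.digit_eq k]
  rfl

theorem convergentError_succ (h : IsContFracDen ρ a q) (k : ℕ) :
    convergentError ρ a q (k + 1) = -gauss^[k + 1] ρ * convergentError ρ a q k := by
  induction k with
  | zero =>
    have hρ : ρ ≠ 0 := h.mem_Ioo.1.ne'
    rw [h.gauss_iterate_succ]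
    simp only [convergentError, convergentNum, h.den_zero, h.den_one, Function.iterate_zero_apply]
    field_simp
    push_cast
    ring
  | succ k ih =>
    have hx : gauss^[k + 1] ρ ≠ 0 := (gauss_iterate_mem_Ioo h.irrational h.mem_Ioo _).1.ne'
    have hrec : convergentError ρ a q (k + 2) =
        a (k + 1) * convergentError ρ a q (k + 1) + convergentError ρ a q k := by
      simp only [convergentError, convergentNum, h.den_add_two]
      push_cast
      ring
    rw [hrec, h.gauss_iterate_succ (k + 1), ih]
    field_simp
    ring

theorem abs_convergentError_succ (h : IsContFracDen ρ a q) (k : ℕ) :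
    |convergentError ρ a q (k + 1)| = gauss^[k + 1] ρ * |convergentError ρ a q k| := by
  rw [h.convergentError_succ, abs_mul, abs_neg,
    abs_of_pos (gauss_iterate_mem_Ioo h.irrational h.mem_Ioo _).1]

theorem abs_convergentError_mem_Ioo (h : IsContFracDen ρ a q) (k : ℕ) :
    |convergentError ρ a q k| ∈ Set.Ioo (0 : ℝ) 1 := by
  induction k with
  | zero =>
    simpa [convergentError, convergentNum, h.den_zero, abs_of_pos h.mem_Ioo.1] using h.mem_Ioo
  | succ k ih =>
    have hx := gauss_iterate_mem_Ioo h.irrational h.mem_Ioo (k + 1)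
    rw [h.abs_convergentError_succ]
    exact ⟨mul_pos hx.1 ih.1, mul_lt_one_of_nonneg_of_lt_one_left hx.1.le hx.2 ih.2.le⟩

theorem abs_convergentError_succ_lt (h : IsContFracDen ρ a q) (k : ℕ) :
    |convergentError ρ a q (k + 1)| < |convergentError ρ a q k| := by
  rw [h.abs_convergentError_succ]
  exact mul_lt_of_lt_one_left (h.abs_convergentError_mem_Ioo k).1
    (gauss_iterate_mem_Ioo h.irrational h.mem_Ioo _).2

theorem convergentError_mul_succ_neg (h : IsContFracDen ρ a q) (k : ℕ) :
    convergentError ρ a q k * convergentError ρ a q (k + 1) < 0 := by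
  have hx := (gauss_iterate_mem_Ioo h.irrational h.mem_Ioo (k + 1)).1
  have hE := (h.abs_convergentError_mem_Ioo k).1
  have := mul_pos hx (mul_self_pos.2 (abs_pos.1 hE))
  rw [h.convergentError_succ]
  linarith

theorem one_le_digit (h : IsContFracDen ρ a q) (k : ℕ) : 1 ≤ a k := by
  have hx := gauss_iterate_mem_Ioo h.irrational h.mem_Ioo k
  have : (1 : ℤ) ≤ a k := by
    rw [h.digit_eq, Int.le_floor]
    exact_mod_cast ((one_lt_inv₀ hx.1).2 hx.2).le
  exact_mod_cast this

theorem abs_convergentError_succ_add_lt_one (h : IsContFracDen ρ a q) (k : ℕ) :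
    |convergentError ρ a q (k + 1)| + |convergentError ρ a q (k + 2)| < 1 := by
  have hx := gauss_iterate_mem_Ioo h.irrational h.mem_Ioo (k + 1)
  have ha : (1 : ℝ) ≤ a (k + 1) := by exact_mod_cast h.one_le_digit (k + 1)
  have hxy : gauss^[k + 1] ρ * (1 + gauss^[k + 2] ρ) ≤ 1 := by
    calc gauss^[k + 1] ρ * (1 + gauss^[k + 2] ρ)
        ≤ gauss^[k + 1] ρ * (gauss^[k + 1] ρ)⁻¹ := by
          rw [h.gauss_iterate_succ (k + 1)]
          exact mul_le_mul_of_nonneg_left (by linarith) hx.1.le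
      _ = 1 := mul_inv_cancel₀ hx.1.ne'
  have hE := h.abs_convergentError_mem_Ioo k
  calc |convergentError ρ a q (k + 1)| + |convergentError ρ a q (k + 2)|
      = gauss^[k + 1] ρ * (1 + gauss^[k + 2] ρ) * |convergentError ρ a q k| := by
        rw [h.abs_convergentError_succ (k + 1), h.abs_convergentError_succ k]
        ring
    _ ≤ |convergentError ρ a q k| := mul_le_of_le_one_left hE.1.le hxy
    _ < 1 := hE.2

theorem abs_convergentError_le_abs_sub (h : IsContFracDen ρ a q) {k j : ℕ} (hj : 0 < j)
    (hjk : j < q (k + 1)) (m : ℤ) : |convergentError ρ a q k| ≤ |j * ρ - m| := by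
  set p := convergentNum a
  set e : ℤ := (-1) ^ k
  have he : e * e = 1 := by rw [← pow_add, ← two_mul, pow_mul]; norm_num
  have hdet := den_mul_convergentNum_sub h.den_zero h.den_one h.den_add_two k
  -- Unimodularity lets us write `(j, m) = u (q k, p k) + v (q (k+1), p (k+1))` over `ℤ`.
  set u : ℤ := e * (j * p (k + 1) - m * q (k + 1))
  set v : ℤ := e * (m * q k - j * p k)
  have hj_eq : (j : ℤ) = u * q k + v * q (k + 1) := by
    linear_combination (-(e * j)) * hdet - j * he
  have hm_eq : m = u * p k + v * p (k + 1) := by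
    linear_combination (-(e * m)) * hdet - m * he
  have hsign : u ≠ 0 ∧ u * v ≤ 0 := by
    have hq : (0 : ℤ) ≤ q k := by positivity
    have hjQ : (j : ℤ) < q (k + 1) := by exact_mod_cast hjk
    have hj' : (0 : ℤ) < j := by exact_mod_cast hj
    rcases le_or_gt v 0 with hv | hv
    · have hu : 0 < u := by
        by_contra! hu
        nlinarith [mul_nonneg (neg_nonneg.2 hu) hq]
      exact ⟨hu.ne', by nlinarith⟩
    · have hu : u < 0 := by
        by_contra! hu
        nlinarith [mul_nonneg hu hq]
      exact ⟨hu.ne, by nlinarith⟩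
  have hsplit : (j : ℝ) * ρ - m =
      u * convergentError ρ a q k + v * convergentError ρ a q (k + 1) := by
    rw [hm_eq, show (j : ℝ) = ((j : ℤ) : ℝ) by norm_cast, hj_eq]
    simp only [convergentError]
    push_cast
    ring
  have hsame : 0 ≤ (u * convergentError ρ a q k) * (v * convergentError ρ a q (k + 1)) := by
    have := mul_nonneg_of_nonpos_of_nonpos (by exact_mod_cast hsign.2 : (u : ℝ) * v ≤ 0)
      (h.convergentError_mul_succ_neg k).le
    linarith
  have hu1 : (1 : ℝ) ≤ |(u : ℝ)| := by exact_mod_cast Int.one_le_abs hsign.1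
  calc |convergentError ρ a q k|
      ≤ |(u : ℝ)| * |convergentError ρ a q k| := le_mul_of_one_le_left (abs_nonneg _) hu1
    _ ≤ |u * convergentError ρ a q k| + |v * convergentError ρ a q (k + 1)| := by
      rw [abs_mul]; exact le_add_of_nonneg_right (abs_nonneg _)
    _ = |j * ρ - m| := by rw [hsplit, (abs_add_eq_add_abs_iff _ _).2 (mul_nonneg_iff.1 hsame)]

theorem abs_convergentError_lt_abs_sub (h : IsContFracDen ρ a q) {k j : ℕ} (hj : 0 < j)
    (hjk : j < q k) (m : ℤ) : |convergentError ρ a q k| < |j * ρ - m| := by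
  obtain ⟨l, rfl⟩ : ∃ l, k = l + 1 :=
    Nat.exists_eq_add_one_of_ne_zero (by rintro rfl; rw [h.den_zero] at hjk; omega)
  exact (h.abs_convergentError_succ_lt l).trans_le (h.abs_convergentError_le_abs_sub hj hjk m)

end IsContFracDen

theorem coe_convergentError (ρ : ℝ) (a q : ℕ → ℕ) (k : ℕ) :
    (convergentError ρ a q k : 𝕋) = ((q k * ρ : ℝ) : 𝕋) := by
  simp [convergentError]

theorem closest_returns_general (f : AddCircle (1:ℝ) → AddCircle (1:ℝ)) (F : ℝ → ℝ)
    (hlift : ∀ x : ℝ, f ((x : ℝ) : AddCircle (1:ℝ)) = ((F x : ℝ) : AddCircle (1:ℝ)))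
    (hmono : StrictMono F) (hper : ∀ x, F (x + 1) = F x + 1)
    (ρ : ℝ) (hirr : Irrational ρ) (hρ : ρ ∈ Set.Ioo (0:ℝ) 1)
    (hrot : Tendsto (fun n : ℕ => F^[n] 0 / n) atTop (𝓝 ρ))
    (a qd : ℕ → ℕ)
    (hdig : ∀ j, (a j : ℤ) = ⌊(gauss^[j] ρ)⁻¹⌋)
    (hq0 : qd 0 = 1) (hq1 : qd 1 = a 0)
    (hqrec : ∀ k, qd (k + 2) = a (k + 1) * qd (k + 1) + qd k)
    (k : ℕ) (x : AddCircle (1:ℝ)) (A : Set (AddCircle (1:ℝ)))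
    (hA : A = posArc x (f^[qd k] x) ∨ A = posArc (f^[qd k] x) x)
    (hAnot : f^[qd (k + 1)] x ∉ A) :
    ∀ j, 0 < j → j < qd k → f^[j] x ∉ A := by
  intro j hj hjk
  have hcf : IsContFracDen ρ a qd := ⟨hirr, hρ, hdig, hq0, hq1, hqrec⟩
  obtain ⟨l, rfl⟩ : ∃ l, k = l + 1 :=
    Nat.exists_eq_add_one_of_ne_zero (by rintro rfl; rw [hq0] at hjk; omega)
  let g : CircleDeg1Lift := ⟨⟨F, hmono.monotone⟩, hper⟩
  have hτ : τ g = ρ := g.translationNumber_eq_of_tendsto₀ hrot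
  have horbit := iterate_mem_posArc_iff g hlift (hτ ▸ hirr) x
  rw [hτ] at horbit
  set δ := convergentError ρ a qd (l + 1)
  obtain ⟨B, hB, hAB⟩ : ∃ B, (B = posArc 0 δ ∨ B = posArc δ 0) ∧
      ∀ n, f^[n] x ∈ A ↔ ((n * ρ : ℝ) : 𝕋) ∈ B := by
    rcases hA with rfl | rfl
    · exact ⟨_, Or.inl rfl, fun n => by simpa [δ, coe_convergentError] using horbit n 0 _⟩
    · exact ⟨_, Or.inr rfl, fun n => by simpa [δ, coe_convergentError] using horbit n _ 0⟩
  rw [hAB, ← coe_convergentError] at hAnot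
  rw [hAB]
  exact coe_notMem_posArc_of_abs_lt (hcf.convergentError_mul_succ_neg _)
    (hcf.abs_convergentError_succ_add_lt_one l) (hcf.abs_convergentError_lt_abs_sub hj hjk) hB hAnot

/-- for an orientation-preserving circle homeomorphism `f` with irrational
rotation number `ρ` with convergent denominators `qd k`, the iterate `f^[qd k]` is a
closest return: for every `x` and every `0 < j < qd k`, the point `f^[j] x` does not lie
in the closed arc `A` between `x` and `f^[qd k] x` not containing `f^[qd (k+1)] x`. -/
theorem closest_returns (f : AddCircle (1:ℝ) → AddCircle (1:ℝ)) (F : ℝ → ℝ)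
    (hlift : ∀ x : ℝ, f ((x : ℝ) : AddCircle (1:ℝ)) = ((F x : ℝ) : AddCircle (1:ℝ)))
    (hmono : StrictMono F) (hcont : Continuous F) (hsurj : Function.Surjective F)
    (hper : ∀ x, F (x + 1) = F x + 1)
    (ρ : ℝ) (hirr : Irrational ρ) (hρ : ρ ∈ Set.Ioo (0:ℝ) 1)
    (hrot : Tendsto (fun n : ℕ => F^[n] 0 / n) atTop (𝓝 ρ))
    (a qd : ℕ → ℕ)
    (hdig : ∀ j, (a j : ℤ) = ⌊(gauss^[j] ρ)⁻¹⌋)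
    (hq0 : qd 0 = 1) (hq1 : qd 1 = a 0)
    (hqrec : ∀ k, qd (k + 2) = a (k + 1) * qd (k + 1) + qd k)
    (k : ℕ) (x : AddCircle (1:ℝ)) (A : Set (AddCircle (1:ℝ)))
    (hA : A = posArc x (f^[qd k] x) ∨ A = posArc (f^[qd k] x) x)
    (hAnot : f^[qd (k + 1)] x ∉ A) :
    ∀ j, 0 < j → j < qd k → f^[j] x ∉ A :=
  closest_returns_general f F hlift hmono hper ρ hirr hρ hrot a qd hdig hq0 hq1 hqrec k x A hA hAnot
end

section
/- For an orientation-preserving circle homeomorphism f with irrational rotation number and a point x ∈ 𝕋, the collection P_k(x) = { f^i(I_k(x)) : 0 ≤ i ≤ q_{k+1}-1 } ∪ { f^j(I_{k+1}(x)) : 0 ≤ j ≤ q_k-1 } covers the circle with the intervals having pairwise disjoint interiors. -/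
/-!
Let `g` be the lift of `f`; its translation number is `ρ`. For `d > 0` and `c ∈ ℤ` the function
`g^d(y) - y - c` has the sign of `dρ - c` everywhere, since `dρ` is not an integer. So the orbit of
`x` has the same cyclic order as the orbit of `0` under the rotation by `ρ`, and every incidence
between orbit points and arcs with endpoints on the orbit can be read off the rotation.

For the rotation put `(u, v) = (q_k, q_{k+1})` if `k` is even and `(q_{k+1}, q_k)` if `k` is odd.
The arcs of `P_k(x)` start at the points `nρ`, `n < u + v`, and the arc starting at `nρ` ends at
`(n + u)ρ` if `n < v` and at `(n - v)ρ` otherwise. Every end point is again a starting point, so the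
arcs cover the circle. Writing `Dρ - m` in the basis `uρ - p`, `r - vρ` of convergent errors
(unimodular since `u r - v p = 1`) shows that no other starting point lies in the half-open arc from
`nρ` to its end point (the two-gap theorem), so the interiors are disjoint.
-/

open Filter Topology

open Set Function

local notation "𝕋" => AddCircle (1:ℝ)
local notation "τ" => CircleDeg1Lift.translationNumber

noncomputable def arcLength (a b : 𝕋) : ℝ := AddCircle.equivIco 1 0 (b - a)

lemma arcLength_mem_Ico (a b : 𝕋) : arcLength a b ∈ Ico (0:ℝ) 1 := by
  obtain ⟨h0, h1⟩ := (AddCircle.equivIco 1 0 (b - a)).2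
  exact ⟨h0, h1.trans_eq (zero_add 1)⟩

lemma coe_arcLength (a b : 𝕋) : (arcLength a b : 𝕋) = b - a := AddCircle.coe_equivIco

lemma arcLength_coe (x y : ℝ) : arcLength x y = Int.fract (y - x) := by
  rw [arcLength, ← AddCircle.coe_sub, AddCircle.coe_equivIco_mk_apply, div_one, mul_one]

lemma arcLength_eq_of_coe {a b : 𝕋} {s : ℝ} (hs : s ∈ Ico (0:ℝ) 1) (h : (s : 𝕋) = b - a) :
    arcLength a b = s := by
  rw [arcLength, ← h, AddCircle.coe_equivIco_mk_apply, div_one, mul_one,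
    Int.fract_eq_self.2 hs]

lemma mem_posArc_iff {a b c : 𝕋} : c ∈ posArc a b ↔ arcLength a c ≤ arcLength a b := by
  constructor
  · rintro ⟨s, t, hs, hst, ht, hsc, htb⟩
    rwa [arcLength_eq_of_coe ⟨hs, hst.trans_lt ht⟩ hsc,
      arcLength_eq_of_coe ⟨hs.trans hst, ht⟩ htb]
  · intro h
    exact ⟨_, _, (arcLength_mem_Ico a c).1, h, (arcLength_mem_Ico a b).2,
      coe_arcLength a c, coe_arcLength a b⟩

lemma coe_mem_posArc_iff (x y z : ℝ) :
    (y : 𝕋) ∈ posArc x z ↔ Int.fract (y - x) ≤ Int.fract (z - x) := by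
  rw [mem_posArc_iff, arcLength_coe, arcLength_coe]

lemma arcLength_pos {a b : 𝕋} (h : a ≠ b) : 0 < arcLength a b := by
  refine (arcLength_mem_Ico a b).1.lt_of_ne fun h0 => h ?_
  have hb := coe_arcLength a b
  rw [← h0, AddCircle.coe_zero] at hb
  exact (sub_eq_zero.1 hb.symm).symm

lemma arcLength_add_arcLength {a b c : 𝕋} (h : arcLength a b ≤ arcLength a c) :
    arcLength a b + arcLength b c = arcLength a c := by
  have hbc : arcLength b c = arcLength a c - arcLength a b := by
    refine arcLength_eq_of_coe ⟨sub_nonneg.2 h, ?_⟩ ?_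
    · linarith [(arcLength_mem_Ico a c).2, (arcLength_mem_Ico a b).1]
    · rw [AddCircle.coe_sub, coe_arcLength, coe_arcLength]; abel
  linarith

lemma arcLength_add_arcLength' {a b c : 𝕋} (h : arcLength b c ≤ arcLength a c) :
    arcLength a b + arcLength b c = arcLength a c := by
  have hab : arcLength a b = arcLength a c - arcLength b c := by
    refine arcLength_eq_of_coe ⟨sub_nonneg.2 h, ?_⟩ ?_
    · linarith [(arcLength_mem_Ico a c).2, (arcLength_mem_Ico b c).1]
    · rw [AddCircle.coe_sub, coe_arcLength, coe_arcLength]; abel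
  linarith

lemma arcLength_lt_of_mem_interior {a b c : 𝕋} (hc : c ∈ interior (posArc a b)) :
    arcLength a c < arcLength a b := by
  -- otherwise `c = b`, and the points just after `b` are not in the arc
  refine (mem_posArc_iff.1 (interior_subset hc)).lt_of_ne fun heq => ?_
  obtain rfl : c = b := by
    have hac := coe_arcLength a c
    rwa [heq, coe_arcLength, sub_left_inj, eq_comm] at hac
  have hnhds : ∀ᶠ ε : ℝ in 𝓝 0, c + (ε : 𝕋) ∈ posArc a c := by
    have hcont : Continuous fun ε : ℝ => c + (ε : 𝕋) :=
      continuous_const.add continuous_quotient_mk'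
    have h0 := hcont.tendsto 0
    rw [AddCircle.coe_zero, add_zero] at h0
    exact h0 (mem_interior_iff_mem_nhds.1 hc)
  obtain ⟨ε, hmem, hε⟩ := ((hnhds.filter_mono nhdsWithin_le_nhds).and
    (Ioo_mem_nhdsGT (sub_pos.2 (arcLength_mem_Ico a c).2))).exists
  have hlen : arcLength a (c + ε) = arcLength a c + ε := by
    refine arcLength_eq_of_coe ⟨?_, ?_⟩ ?_
    · linarith [(arcLength_mem_Ico a c).1, hε.1]
    · linarith [hε.2]
    · rw [AddCircle.coe_add, coe_arcLength]; abel
  linarith [mem_posArc_iff.1 hmem, hε.1]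

theorem iUnion_posArc_eq_univ {ι : Type*} [Finite ι] [Nonempty ι] (a b : ι → 𝕋)
    (hne : ∀ i, a i ≠ b i) (hsucc : ∀ i, ∃ j, b i = a j) :
    ⋃ i, posArc (a i) (b i) = univ := by
  -- if `c` lay beyond the arc starting closest before it, the next arc would start even closer
  refine eq_univ_of_forall fun c => mem_iUnion.2 ?_
  obtain ⟨i, hmin⟩ := Finite.exists_min fun i => arcLength (a i) c
  refine ⟨i, mem_posArc_iff.2 (not_lt.1 fun hlt => ?_)⟩
  obtain ⟨j, hj⟩ := hsucc i
  have hsplit := arcLength_add_arcLength hlt.le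
  have hij : a i ≠ a j := hj ▸ hne i
  rw [hj] at hsplit
  linarith [hmin j, arcLength_pos hij]

theorem pairwise_disjoint_interior_posArc {ι : Type*} (a b : ι → 𝕋)
    (hsucc : ∀ i j, i ≠ j → b i ∈ posArc (a i) (a j)) :
    Pairwise fun i j =>
      Disjoint (interior (posArc (a i) (b i))) (interior (posArc (a j) (b j))) := by
  intro i j hij
  refine disjoint_left.2 fun c hci hcj => ?_
  wlog hle : arcLength (a i) c ≤ arcLength (a j) c generalizing i j
  · exact this hij.symm hcj hci (le_of_not_ge hle)
  -- going round from `a j`, one meets `b j` before `a i`, and `a i` before `c`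
  have hji := mem_posArc_iff.1 (hsucc j i hij.symm)
  have hsplit := arcLength_add_arcLength' hle
  linarith [arcLength_lt_of_mem_interior hcj, (arcLength_mem_Ico (a i) c).1]

def IsTiling {X ι : Type*} [TopologicalSpace X] (P : ι → Set X) : Prop :=
  (⋃ i, P i) = univ ∧ Pairwise fun i j => Disjoint (interior (P i)) (interior (P j))

lemma IsTiling.comp_equiv {X ι κ : Type*} [TopologicalSpace X] {P : ι → Set X} (h : IsTiling P)
    (e : κ ≃ ι) : IsTiling (P ∘ e) :=
  ⟨by rw [← h.1]; exact e.surjective.iUnion_comp P, h.2.comp_of_injective e.injective⟩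

section Lift

variable {f : 𝕋 → 𝕋} {g : CircleDeg1Lift}

lemma exists_eq_coe_add (A : ℝ) (c : 𝕋) : ∃ s ∈ Ico (0:ℝ) 1, c = ↑(A + s) :=
  ⟨arcLength A c, arcLength_mem_Ico _ _,
    by rw [AddCircle.coe_add, coe_arcLength, add_sub_cancel]⟩

lemma arcLength_map_coe_add (hfg : ∀ x : ℝ, f x = g x) (hmono : StrictMono g) (A : ℝ) {s : ℝ}
    (hs : s ∈ Ico (0:ℝ) 1) : arcLength (f A) (f ↑(A + s)) = g (A + s) - g A := by
  rw [hfg, hfg, arcLength_coe, Int.fract_eq_self]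
  refine ⟨sub_nonneg.2 (hmono.monotone (le_add_of_nonneg_right hs.1)), ?_⟩
  have hlt := hmono (show A + s < A + 1 by linarith [hs.2])
  rw [g.map_add_one] at hlt
  linarith

lemma arcLength_map_le_iff (hfg : ∀ x : ℝ, f x = g x) (hmono : StrictMono g) (a b c : 𝕋) :
    arcLength (f a) (f c) ≤ arcLength (f a) (f b) ↔ arcLength a c ≤ arcLength a b := by
  obtain ⟨A, rfl⟩ := QuotientAddGroup.mk_surjective a
  obtain ⟨s, hs, rfl⟩ := exists_eq_coe_add A c
  obtain ⟨t, ht, rfl⟩ := exists_eq_coe_add A b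
  rw [arcLength_map_coe_add hfg hmono A hs, arcLength_map_coe_add hfg hmono A ht,
    arcLength_coe, arcLength_coe, add_sub_cancel_left, add_sub_cancel_left,
    Int.fract_eq_self.2 hs, Int.fract_eq_self.2 ht, sub_le_sub_iff_right, hmono.le_iff_le,
    add_le_add_iff_left]

theorem image_posArc (hfg : ∀ x : ℝ, f x = g x) (hmono : StrictMono g) (hsurj : Surjective g)
    (a b : 𝕋) : f '' posArc a b = posArc (f a) (f b) := by
  ext d
  constructor
  · rintro ⟨c, hc, rfl⟩
    exact mem_posArc_iff.2 ((arcLength_map_le_iff hfg hmono a b c).2 (mem_posArc_iff.1 hc))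
  · intro hd
    obtain ⟨Y, rfl⟩ := QuotientAddGroup.mk_surjective d
    obtain ⟨X, rfl⟩ := hsurj Y
    rw [← hfg] at hd ⊢
    exact ⟨X, mem_posArc_iff.2
      ((arcLength_map_le_iff hfg hmono a b X).1 (mem_posArc_iff.1 hd)), rfl⟩

theorem image_iterate_posArc (hfg : ∀ x : ℝ, f x = g x) (hmono : StrictMono g)
    (hsurj : Surjective g) (n : ℕ) (a b : 𝕋) :
    f^[n] '' posArc a b = posArc (f^[n] a) (f^[n] b) := by
  induction n with
  | zero => simp
  | succ n ih =>
    rw [iterate_succ', image_comp, ih, image_posArc hfg hmono hsurj, comp_apply, comp_apply]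

lemma iterate_coe (hfg : ∀ x : ℝ, f x = g x) (n : ℕ) (x : ℝ) : f^[n] x = ((g ^ n) x : 𝕋) := by
  induction n with
  | zero => rfl
  | succ n ih => rw [iterate_succ_apply', ih, hfg, pow_succ', CircleDeg1Lift.mul_apply]

lemma CircleDeg1Lift.add_int_lt_map_iff (h : CircleDeg1Lift) {c : ℤ} (hc : τ h ≠ c) (y : ℝ) :
    y + c < h y ↔ (c : ℝ) < τ h :=
  ⟨fun hy => (lt_or_gt_of_ne hc).resolve_left fun hlt =>
    (h.map_lt_of_translationNumber_lt_int hlt y).not_gt hy,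
   fun hlt => h.lt_map_of_int_lt_translationNumber hlt y⟩

lemma CircleDeg1Lift.map_lt_add_int_iff (h : CircleDeg1Lift) {c : ℤ} (hc : τ h ≠ c) (y : ℝ) :
    h y < y + c ↔ τ h < c :=
  ⟨fun hy => (lt_or_gt_of_ne hc).resolve_right fun hlt =>
    (h.lt_map_of_int_lt_translationNumber hlt y).not_gt hy,
   fun hlt => h.map_lt_of_translationNumber_lt_int hlt y⟩

theorem CircleDeg1Lift.pow_apply_add_int_lt_iff (hτ : Irrational (τ g)) (X : ℝ) (n m : ℕ)
    (c : ℤ) : (g ^ n) X + c < (g ^ m) X ↔ n * τ g + c < m * τ g := by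
  have hne : ∀ d : ℕ, 0 < d → ∀ c : ℤ, τ (g ^ d) ≠ c := fun d hd c => by
    rw [CircleDeg1Lift.translationNumber_pow]; exact (hτ.natCast_mul hd.ne').ne_int c
  rcases le_or_gt n m with hnm | hnm
  · obtain ⟨d, rfl⟩ := Nat.exists_eq_add_of_le' hnm
    rw [pow_add, CircleDeg1Lift.mul_apply]
    rcases Nat.eq_zero_or_pos d with rfl | hd
    · simp
    · rw [(g ^ d).add_int_lt_map_iff (hne d hd c), CircleDeg1Lift.translationNumber_pow]
      push_cast
      constructor <;> intro <;> linarith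
  · obtain ⟨d, rfl⟩ := Nat.exists_eq_add_of_le' hnm.le
    have hd : 0 < d := by omega
    have hiff := (g ^ d).map_lt_add_int_iff (hne d hd (-c)) ((g ^ m) X)
    rw [CircleDeg1Lift.translationNumber_pow] at hiff
    rw [pow_add, CircleDeg1Lift.mul_apply]
    push_cast at hiff ⊢
    constructor <;> intro hlt
    · linarith [hiff.1 (by linarith)]
    · linarith [hiff.2 (by linarith)]

theorem fract_sub_le_fract_sub_iff {x y : ℕ → ℝ}
    (h : ∀ n m (c : ℤ), x n + c < x m ↔ y n + c < y m) (n w l : ℕ) :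
    Int.fract (x w - x n) ≤ Int.fract (x l - x n) ↔
      Int.fract (y w - y n) ≤ Int.fract (y l - y n) := by
  have hle : ∀ n m (c : ℤ), x n + c ≤ x m ↔ y n + c ≤ y m := fun n m c => by
    simpa only [not_lt, Int.cast_neg, le_add_neg_iff_add_le] using (h m n (-c)).not
  have hfloor : ∀ n m, ⌊x m - x n⌋ = ⌊y m - y n⌋ := fun n m => by
    have key : ∀ c : ℤ, (c : ℝ) ≤ x m - x n ↔ (c : ℝ) ≤ y m - y n := fun c => by
      rw [le_sub_iff_add_le', le_sub_iff_add_le']; exact hle n m c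
    exact le_antisymm (Int.le_floor.2 ((key _).1 (Int.floor_le _)))
      (Int.le_floor.2 ((key _).2 (Int.floor_le _)))
  have hshift := hle w l (⌊y l - y n⌋ - ⌊y w - y n⌋)
  push_cast at hshift
  rw [Int.fract, Int.fract, Int.fract, Int.fract, hfloor n w, hfloor n l]
  constructor <;> intro hlt
  · linarith [hshift.1 (by linarith)]
  · linarith [hshift.2 (by linarith)]

theorem iterate_mem_posArc_iff_s8 (hfg : ∀ x : ℝ, f x = g x) (hτ : Irrational (τ g)) (x : 𝕋)
    (n w l : ℕ) : f^[w] x ∈ posArc (f^[n] x) (f^[l] x) ↔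
      Int.fract (w * τ g - n * τ g) ≤ Int.fract (l * τ g - n * τ g) := by
  obtain ⟨X, rfl⟩ := QuotientAddGroup.mk_surjective x
  rw [iterate_coe hfg, iterate_coe hfg, iterate_coe hfg, coe_mem_posArc_iff]
  exact fract_sub_le_fract_sub_iff (fun n m c => g.pow_apply_add_int_lt_iff hτ X n m c) n w l

theorem iterate_ne_iterate (hfg : ∀ x : ℝ, f x = g x) (hτ : Irrational (τ g)) (x : 𝕋)
    {n m : ℕ} (hnm : n ≠ m) : f^[n] x ≠ f^[m] x := by
  intro h
  have h0 := (iterate_mem_posArc_iff_s8 hfg hτ x n m n).1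
    (by rw [h]; exact mem_posArc_iff.2 le_rfl)
  rw [sub_self, Int.fract_zero] at h0
  obtain ⟨k, hk⟩ := Int.fract_eq_zero_iff.1 (le_antisymm h0 (Int.fract_nonneg _))
  have hmn : ((m - n : ℤ) : ℝ) * τ g = k := by push_cast; linarith
  exact (hτ.intCast_mul (by omega)).ne_int k hmn

end Lift

section GapPair

variable {ρ : ℝ} {u v : ℕ}

-- `(u, v)` stands for `(q_k, q_{k+1})` if `k` is even and for `(q_{k+1}, q_k)` if `k` is odd;
-- `p` and `r` are the matching convergent numerators.
def IsGapPair (ρ : ℝ) (u v : ℕ) : Prop :=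
  0 < u ∧ 0 < v ∧ ∃ p r : ℤ, (u : ℤ) * r - v * p = 1 ∧ (p : ℝ) < u * ρ ∧ (v : ℝ) * ρ < r

lemma gap_add_gap_le_one {p r : ℤ} (hu : 0 < u) (hv : 0 < v) (hdet : (u : ℤ) * r - v * p = 1)
    (hp : (p : ℝ) < u * ρ) (hr : (v : ℝ) * ρ < r) : (u * ρ - p) + (r - v * ρ) ≤ 1 := by
  have hdet' : (u : ℝ) * r - v * p = 1 := by exact_mod_cast hdet
  have hu' : (1 : ℝ) ≤ u := by exact_mod_cast hu
  have hv' : (1 : ℝ) ≤ v := by exact_mod_cast hv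
  nlinarith [mul_nonneg (sub_nonneg.2 hv') (sub_pos.2 hp).le,
    mul_nonneg (sub_nonneg.2 hu') (sub_pos.2 hr).le]

lemma coeffs_nonneg_of_abs_lt {A B : ℤ} {δ δ' : ℝ} (hδ : 0 < δ) (hδ' : 0 < δ')
    (hval : 0 ≤ A * δ + B * δ') (hlo : -((v : ℤ) + u) < A * u - B * v)
    (hhi : A * u - B * v < v + u) : 0 ≤ A ∧ 0 ≤ B := by
  constructor
  · by_contra! hA
    obtain hB | hB := le_or_gt B 0
    · have hA' : (A : ℝ) ≤ -1 := by exact_mod_cast (show A ≤ -1 by omega)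
      have hB' : (B : ℝ) ≤ 0 := by exact_mod_cast hB
      nlinarith
    · nlinarith
  · by_contra! hB
    obtain hA | hA := le_or_gt A 0
    · have hA' : (A : ℝ) ≤ 0 := by exact_mod_cast hA
      have hB' : (B : ℝ) ≤ -1 := by exact_mod_cast (show B ≤ -1 by omega)
      nlinarith
    · nlinarith

lemma gap_le_mul_sub_int {p r D m : ℤ} (hdet : (u : ℤ) * r - v * p = 1)
    (hp : (p : ℝ) < u * ρ) (hr : (v : ℝ) * ρ < r) (hD0 : D ≠ 0) (hlo : -((v : ℤ) + u) < D)
    (hhi : D < v + u) (hm : (m : ℝ) ≤ D * ρ) :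
    (-(v : ℤ) < D → u * ρ - p ≤ D * ρ - m) ∧ (D < u → r - v * ρ ≤ D * ρ - m) := by
  have hdet' : (u : ℝ) * r - v * p = 1 := by exact_mod_cast hdet
  -- `(D, m) = A (u, p) - B (v, r)`
  obtain ⟨A, B, hval, rfl⟩ : ∃ A B : ℤ,
      (D : ℝ) * ρ - m = A * (u * ρ - p) + B * (r - v * ρ) ∧ D = A * u - B * v :=
    ⟨r * D - v * m, p * D - u * m, by push_cast; linear_combination -(D * ρ - m) * hdet',
      by linear_combination -D * hdet⟩
  obtain ⟨hA, hB⟩ := coeffs_nonneg_of_abs_lt (sub_pos.2 hp) (sub_pos.2 hr)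
    (by linarith) hlo hhi
  have hA' : (0 : ℝ) ≤ A := by exact_mod_cast hA
  have hB' : (0 : ℝ) ≤ B := by exact_mod_cast hB
  constructor
  · intro hlo'
    have hA1 : (1 : ℝ) ≤ A := by
      suffices 1 ≤ A by exact_mod_cast this
      by_contra! hA0
      obtain rfl : A = 0 := by omega
      obtain rfl | hB1 : B = 0 ∨ 1 ≤ B := by omega
      · exact hD0 (by simp)
      · nlinarith
    nlinarith
  · intro hhi'
    have hB1 : (1 : ℝ) ≤ B := by
      suffices 1 ≤ B by exact_mod_cast this
      by_contra! hB0
      obtain rfl : B = 0 := by omega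
      obtain rfl | hA1 : A = 0 ∨ 1 ≤ A := by omega
      · exact hD0 (by simp)
      · nlinarith
    nlinarith

def arcEnd (u v n : ℕ) : ℕ := if n < v then n + u else n - v

theorem IsGapPair.fract_arcEnd_le (hg : IsGapPair ρ u v) {n w : ℕ} (hn : n < v + u)
    (hw : w < v + u) (hnw : n ≠ w) :
    Int.fract (arcEnd u v n * ρ - n * ρ) ≤ Int.fract (w * ρ - n * ρ) := by
  obtain ⟨hu, hv, p, r, hdet, hp, hr⟩ := hg
  have hsum := gap_add_gap_le_one hu hv hdet hp hr
  have hfract : Int.fract ((w : ℝ) * ρ - n * ρ) =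
      ((w - n : ℤ) : ℝ) * ρ - ⌊((w - n : ℤ) : ℝ) * ρ⌋ := by
    push_cast; rw [← sub_mul]; rfl
  have hgap := gap_le_mul_sub_int (m := ⌊((w - n : ℤ) : ℝ) * ρ⌋) hdet hp hr (by omega)
    (by omega) (by omega) (Int.floor_le _)
  rw [hfract]
  unfold arcEnd
  split_ifs with hnv
  · have hδ : Int.fract (((n + u : ℕ) : ℝ) * ρ - n * ρ) = u * ρ - p :=
      Int.fract_eq_iff.2 ⟨by linarith, by linarith, p, by push_cast; ring⟩
    rw [hδ]
    exact hgap.1 (by omega)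
  · have hδ : Int.fract (((n - v : ℕ) : ℝ) * ρ - n * ρ) = r - v * ρ :=
      Int.fract_eq_iff.2 ⟨by linarith, by linarith, -r,
        by push_cast [Nat.cast_sub (not_lt.1 hnv)]; ring⟩
    rw [hδ]
    exact hgap.2 (by omega)

theorem IsGapPair.iterate_right_mem_posArc {f : 𝕋 → 𝕋} {g : CircleDeg1Lift}
    (hfg : ∀ x : ℝ, f x = g x) (hτ : Irrational (τ g)) (hg : IsGapPair (τ g) u v) (x : 𝕋) :
    f^[v] x ∈ posArc (f^[u] x) x := by
  obtain ⟨hu, hv, p, r, hdet, hp, hr⟩ := hg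
  have hsum := gap_add_gap_le_one hu hv hdet hp hr
  have hv : Int.fract ((v : ℝ) * τ g - u * τ g) = 1 - (u * τ g - p) - (r - v * τ g) :=
    Int.fract_eq_iff.2 ⟨by linarith, by linarith, r - p - 1, by push_cast; ring⟩
  have h0 : Int.fract (-((u : ℝ) * τ g)) = 1 - (u * τ g - p) :=
    Int.fract_eq_iff.2 ⟨by linarith, by linarith, -p - 1, by push_cast; ring⟩
  have hmem := iterate_mem_posArc_iff_s8 hfg hτ x u v 0
  rw [iterate_zero_apply, Nat.cast_zero, zero_mul, zero_sub, hv, h0] at hmem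
  exact hmem.2 (by linarith)

theorem IsGapPair.iterate_left_mem_posArc {f : 𝕋 → 𝕋} {g : CircleDeg1Lift}
    (hfg : ∀ x : ℝ, f x = g x) (hτ : Irrational (τ g)) (hg : IsGapPair (τ g) u v) (x : 𝕋) :
    f^[u] x ∈ posArc x (f^[v] x) := by
  obtain ⟨hu, hv, p, r, hdet, hp, hr⟩ := hg
  have hsum := gap_add_gap_le_one hu hv hdet hp hr
  have hu : Int.fract ((u : ℝ) * τ g) = u * τ g - p :=
    Int.fract_eq_iff.2 ⟨by linarith, by linarith, p, by ring⟩
  have hv : Int.fract ((v : ℝ) * τ g) = 1 - (r - v * τ g) :=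
    Int.fract_eq_iff.2 ⟨by linarith, by linarith, r - 1, by push_cast; ring⟩
  have hmem := iterate_mem_posArc_iff_s8 hfg hτ x 0 u v
  rw [iterate_zero_apply, Nat.cast_zero, zero_mul, sub_zero, sub_zero, hu, hv] at hmem
  exact hmem.2 (by linarith)

end GapPair

section ContinuedFraction

-- `ρ = [0; a 0, a 1, …]` and `q k` is the denominator of its `k`-th convergent.
structure ContFracDenoms (ρ : ℝ) (a q : ℕ → ℕ) : Prop where
  digit : ∀ j, (a j : ℤ) = ⌊(gauss^[j] ρ)⁻¹⌋
  zero : q 0 = 1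
  one : q 1 = a 0
  add_two : ∀ k, q (k + 2) = a (k + 1) * q (k + 1) + q k

def convNum (a : ℕ → ℕ) : ℕ → ℤ
  | 0 => 0
  | 1 => 1
  | k + 2 => a (k + 1) * convNum a (k + 1) + convNum a k

variable {ρ : ℝ} {a q : ℕ → ℕ}

lemma irrational_and_mem_Ioo_gauss_iterate (hirr : Irrational ρ) (hρ : ρ ∈ Ioo (0:ℝ) 1)
    (j : ℕ) :
    Irrational (gauss^[j] ρ) ∧ gauss^[j] ρ ∈ Ioo (0:ℝ) 1 := by
  induction j with
  | zero => exact ⟨hirr, hρ⟩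
  | succ j ih =>
    rw [iterate_succ_apply']
    have hirr' : Irrational (gauss (gauss^[j] ρ)) := ih.1.inv.sub_intCast _
    exact ⟨hirr', (Int.fract_nonneg _).lt_of_ne hirr'.ne_zero.symm, Int.fract_lt_one _⟩

lemma ContFracDenoms.gauss_iterate_succ (h : ContFracDenoms ρ a q) (j : ℕ) :
    gauss^[j + 1] ρ = (gauss^[j] ρ)⁻¹ - a j := by
  rw [iterate_succ_apply', gauss, Int.fract, ← h.digit j, Int.cast_natCast]

lemma ContFracDenoms.one_le_digit (h : ContFracDenoms ρ a q) (hirr : Irrational ρ)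
    (hρ : ρ ∈ Ioo (0:ℝ) 1) (j : ℕ) : 1 ≤ a j := by
  obtain ⟨-, h0, h1⟩ := irrational_and_mem_Ioo_gauss_iterate hirr hρ j
  have : (1 : ℤ) ≤ a j := by
    rw [h.digit, Int.le_floor, Int.cast_one]
    exact ((one_lt_inv₀ h0).2 h1).le
  exact_mod_cast this

lemma ContFracDenoms.one_le (h : ContFracDenoms ρ a q) (hirr : Irrational ρ)
    (hρ : ρ ∈ Ioo (0:ℝ) 1) (k : ℕ) : 1 ≤ q k := by
  induction k using Nat.twoStepInduction with
  | zero => rw [h.zero]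
  | one => rw [h.one]; exact h.one_le_digit hirr hρ 0
  | more k ih _ => rw [h.add_two]; exact ih.trans (Nat.le_add_left _ _)

lemma ContFracDenoms.convNum_mul_sub (h : ContFracDenoms ρ a q) (k : ℕ) :
    convNum a (k + 1) * q k - convNum a k * q (k + 1) = (-1) ^ k := by
  induction k with
  | zero => simp [convNum, h.zero]
  | succ k ih =>
    rw [show convNum a (k + 2) = a (k + 1) * convNum a (k + 1) + convNum a k from rfl,
      h.add_two]
    push_cast
    linear_combination -ih

lemma ContFracDenoms.mul_sub_convNum_succ (h : ContFracDenoms ρ a q) (hirr : Irrational ρ)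
    (hρ : ρ ∈ Ioo (0:ℝ) 1) (k : ℕ) :
    q (k + 1) * ρ - convNum a (k + 1) = -gauss^[k + 1] ρ * (q k * ρ - convNum a k) := by
  induction k with
  | zero =>
    rw [h.gauss_iterate_succ, h.one, h.zero, iterate_zero_apply]
    simp only [convNum, Int.cast_one, Int.cast_zero, Nat.cast_one, sub_zero, one_mul]
    field_simp [hρ.1.ne']
    ring
  | succ k ih =>
    have hθ := (irrational_and_mem_Ioo_gauss_iterate hirr hρ (k + 1)).2.1.ne'
    rw [h.gauss_iterate_succ (k + 1),
      show convNum a (k + 2) = a (k + 1) * convNum a (k + 1) + convNum a k from rfl, h.add_two]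
    push_cast
    linear_combination
      (gauss^[k + 1] ρ)⁻¹ * ih - (q k * ρ - convNum a k) * inv_mul_cancel₀ hθ

lemma ContFracDenoms.mul_sub_convNum_sign (h : ContFracDenoms ρ a q) (hirr : Irrational ρ)
    (hρ : ρ ∈ Ioo (0:ℝ) 1) (k : ℕ) : 0 < (-1) ^ k * (q k * ρ - convNum a k) := by
  induction k with
  | zero => simpa [h.zero, convNum] using hρ.1
  | succ k ih =>
    rw [h.mul_sub_convNum_succ hirr hρ k,
      show (-1 : ℝ) ^ (k + 1) * (-gauss^[k + 1] ρ * (q k * ρ - convNum a k)) =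
        gauss^[k + 1] ρ * ((-1) ^ k * (q k * ρ - convNum a k)) by ring]
    exact mul_pos (irrational_and_mem_Ioo_gauss_iterate hirr hρ (k + 1)).2.1 ih

theorem ContFracDenoms.isGapPair_of_even (h : ContFracDenoms ρ a q) (hirr : Irrational ρ)
    (hρ : ρ ∈ Ioo (0:ℝ) 1) {k : ℕ} (hk : Even k) : IsGapPair ρ (q k) (q (k + 1)) := by
  have hdet := h.convNum_mul_sub k
  have hk0 := h.mul_sub_convNum_sign hirr hρ k
  have hk1 := h.mul_sub_convNum_sign hirr hρ (k + 1)
  rw [hk.neg_one_pow] at hdet hk0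
  rw [hk.add_one.neg_one_pow] at hk1
  exact ⟨h.one_le hirr hρ k, h.one_le hirr hρ (k + 1), convNum a k, convNum a (k + 1),
    by linarith, by linarith, by linarith⟩

theorem ContFracDenoms.isGapPair_of_odd (h : ContFracDenoms ρ a q) (hirr : Irrational ρ)
    (hρ : ρ ∈ Ioo (0:ℝ) 1) {k : ℕ} (hk : Odd k) : IsGapPair ρ (q (k + 1)) (q k) := by
  have hdet := h.convNum_mul_sub k
  have hk0 := h.mul_sub_convNum_sign hirr hρ k
  have hk1 := h.mul_sub_convNum_sign hirr hρ (k + 1)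
  rw [hk.neg_one_pow] at hdet hk0
  rw [hk.add_one.neg_one_pow] at hk1
  exact ⟨h.one_le hirr hρ (k + 1), h.one_le hirr hρ k, convNum a (k + 1), convNum a k,
    by linarith, by linarith, by linarith⟩

end ContinuedFraction

section Partition

variable {f : 𝕋 → 𝕋} {g : CircleDeg1Lift} {u v : ℕ}

theorem isTiling_posArc_arcEnd (hfg : ∀ x : ℝ, f x = g x) (hτ : Irrational (τ g))
    (hgap : IsGapPair (τ g) u v) (x : 𝕋) :
    IsTiling fun n : Fin (v + u) => posArc (f^[n] x) (f^[arcEnd u v n] x) := by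
  obtain ⟨hu, hv, -⟩ := id hgap
  have : Nonempty (Fin (v + u)) := ⟨⟨0, by omega⟩⟩
  have hlt : ∀ n < v + u, arcEnd u v n < v + u := fun n hn => by
    unfold arcEnd; split_ifs <;> omega
  have hne : ∀ n, n ≠ arcEnd u v n := fun n => by unfold arcEnd; split_ifs <;> omega
  refine ⟨iUnion_posArc_eq_univ _ _ (fun n => iterate_ne_iterate hfg hτ x (hne n))
    (fun n => ⟨⟨_, hlt n n.2⟩, rfl⟩), pairwise_disjoint_interior_posArc _ _ fun n w hnw => ?_⟩
  exact (iterate_mem_posArc_iff_s8 hfg hτ x _ _ _).2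
    (hgap.fract_arcEnd_le n.2 w.2 (Fin.val_ne_of_ne hnw))

-- `P_k(x)` is `dynamicalPartition f x (q k) (q (k + 1))` if `k` is even, and
-- `dynamicalPartition f x (q (k + 1)) (q k)` with its two summands swapped if `k` is odd.
def dynamicalPartition (f : 𝕋 → 𝕋) (x : 𝕋) (u v : ℕ) : Fin v ⊕ Fin u → Set 𝕋 :=
  Sum.elim (fun i => f^[i] '' posArc x (f^[u] x)) fun j => f^[j] '' posArc (f^[v] x) x

theorem isTiling_dynamicalPartition (hfg : ∀ x : ℝ, f x = g x) (hmono : StrictMono g)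
    (hsurj : Surjective g) (hτ : Irrational (τ g)) (hgap : IsGapPair (τ g) u v) (x : 𝕋) :
    IsTiling (dynamicalPartition f x u v) := by
  have heq : dynamicalPartition f x u v =
      (fun n : Fin (v + u) => posArc (f^[n] x) (f^[arcEnd u v n] x)) ∘ finSumFinEquiv := by
    funext t
    rcases t with i | j
    · simp only [dynamicalPartition, Sum.elim_inl, comp_apply, finSumFinEquiv_apply_left,
        Fin.val_castAdd, arcEnd, i.isLt, ↓reduceIte, image_iterate_posArc hfg hmono hsurj,
        ← iterate_add_apply]
    · simp only [dynamicalPartition, Sum.elim_inr, comp_apply, finSumFinEquiv_apply_right,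
        Fin.val_natAdd, arcEnd, if_neg (Nat.not_lt.2 (Nat.le_add_right v j)),
        Nat.add_sub_cancel_left, image_iterate_posArc hfg hmono hsurj, ← iterate_add_apply,
        add_comm (j : ℕ) v]
  rw [heq]
  exact (isTiling_posArc_arcEnd hfg hτ hgap x).comp_equiv finSumFinEquiv

end Partition

theorem dynamical_partition_general (f : AddCircle (1:ℝ) → AddCircle (1:ℝ)) (F : ℝ → ℝ)
    (hlift : ∀ x : ℝ, f ((x : ℝ) : AddCircle (1:ℝ)) = ((F x : ℝ) : AddCircle (1:ℝ)))
    (hmono : StrictMono F) (hsurj : Function.Surjective F)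
    (hper : ∀ x, F (x + 1) = F x + 1)
    (ρ : ℝ) (hirr : Irrational ρ) (hρ : ρ ∈ Set.Ioo (0:ℝ) 1)
    (hrot : Tendsto (fun n : ℕ => F^[n] 0 / n) atTop (𝓝 ρ))
    (a qd : ℕ → ℕ)
    (hdig : ∀ j, (a j : ℤ) = ⌊(gauss^[j] ρ)⁻¹⌋)
    (hq0 : qd 0 = 1) (hq1 : qd 1 = a 0)
    (hqrec : ∀ k, qd (k + 2) = a (k + 1) * qd (k + 1) + qd k)
    (k : ℕ) (x : AddCircle (1:ℝ)) (Ik Ik1 : Set (AddCircle (1:ℝ)))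
    (hIk : Ik = posArc x (f^[qd k] x) ∨ Ik = posArc (f^[qd k] x) x)
    (hIknot : f^[qd (k + 1)] x ∉ Ik)
    (hIk1 : Ik1 = posArc x (f^[qd (k + 1)] x) ∨ Ik1 = posArc (f^[qd (k + 1)] x) x)
    (hIk1not : f^[qd (k + 2)] x ∉ Ik1)
    (P : Fin (qd (k + 1)) ⊕ Fin (qd k) → Set (AddCircle (1:ℝ)))
    (hP : P = Sum.elim (fun i : Fin (qd (k + 1)) => f^[(i : ℕ)] '' Ik)
      (fun j : Fin (qd k) => f^[(j : ℕ)] '' Ik1)) :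
    (⋃ i, P i) = Set.univ ∧
      Pairwise fun i j => Disjoint (interior (P i)) (interior (P j)) := by
  let g : CircleDeg1Lift := ⟨⟨F, hmono.monotone⟩, hper⟩
  have hτ : τ g = ρ := g.translationNumber_eq_of_tendsto₀ hrot
  have hcf : ContFracDenoms ρ a qd := ⟨hdig, hq0, hq1, hqrec⟩
  subst hP
  rcases Nat.even_or_odd k with hk | hk
  · have h₀ := hcf.isGapPair_of_even hirr hρ hk
    have h₁ := hcf.isGapPair_of_odd hirr hρ hk.add_one
    rw [← hτ] at h₀ h₁ hirr
    obtain rfl : Ik = posArc x (f^[qd k] x) :=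
      hIk.resolve_right fun h => hIknot (h ▸ h₀.iterate_right_mem_posArc hlift hirr x)
    obtain rfl : Ik1 = posArc (f^[qd (k + 1)] x) x :=
      hIk1.resolve_left fun h => hIk1not (h ▸ h₁.iterate_left_mem_posArc hlift hirr x)
    exact isTiling_dynamicalPartition hlift hmono hsurj hirr h₀ x
  · have h₀ := hcf.isGapPair_of_odd hirr hρ hk
    have h₁ := hcf.isGapPair_of_even hirr hρ hk.add_one
    rw [← hτ] at h₀ h₁ hirr
    obtain rfl : Ik = posArc (f^[qd k] x) x :=
      hIk.resolve_left fun h => hIknot (h ▸ h₀.iterate_left_mem_posArc hlift hirr x)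
    obtain rfl : Ik1 = posArc x (f^[qd (k + 1)] x) :=
      hIk1.resolve_right fun h => hIk1not (h ▸ h₁.iterate_right_mem_posArc hlift hirr x)
    rw [← Sum.elim_swap]
    exact (isTiling_dynamicalPartition hlift hmono hsurj hirr h₀ x).comp_equiv
      (Equiv.sumComm _ _)

/-- the dynamical partition of level `k`,
`P_k(x) = { f^i(I_k(x)) : 0 ≤ i ≤ q_{k+1}-1 } ∪ { f^j(I_{k+1}(x)) : 0 ≤ j ≤ q_k-1 }`,
covers the circle and its intervals have pairwise disjoint interiors. -/
theorem dynamical_partition (f : AddCircle (1:ℝ) → AddCircle (1:ℝ)) (F : ℝ → ℝ)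
    (hlift : ∀ x : ℝ, f ((x : ℝ) : AddCircle (1:ℝ)) = ((F x : ℝ) : AddCircle (1:ℝ)))
    (hmono : StrictMono F) (hcont : Continuous F) (hsurj : Function.Surjective F)
    (hper : ∀ x, F (x + 1) = F x + 1)
    (ρ : ℝ) (hirr : Irrational ρ) (hρ : ρ ∈ Set.Ioo (0:ℝ) 1)
    (hrot : Tendsto (fun n : ℕ => F^[n] 0 / n) atTop (𝓝 ρ))
    (a qd : ℕ → ℕ)
    (hdig : ∀ j, (a j : ℤ) = ⌊(gauss^[j] ρ)⁻¹⌋)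
    (hq0 : qd 0 = 1) (hq1 : qd 1 = a 0)
    (hqrec : ∀ k, qd (k + 2) = a (k + 1) * qd (k + 1) + qd k)
    (k : ℕ) (x : AddCircle (1:ℝ)) (Ik Ik1 : Set (AddCircle (1:ℝ)))
    (hIk : Ik = posArc x (f^[qd k] x) ∨ Ik = posArc (f^[qd k] x) x)
    (hIknot : f^[qd (k + 1)] x ∉ Ik)
    (hIk1 : Ik1 = posArc x (f^[qd (k + 1)] x) ∨ Ik1 = posArc (f^[qd (k + 1)] x) x)
    (hIk1not : f^[qd (k + 2)] x ∉ Ik1)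
    (P : Fin (qd (k + 1)) ⊕ Fin (qd k) → Set (AddCircle (1:ℝ)))
    (hP : P = Sum.elim (fun i : Fin (qd (k + 1)) => f^[(i : ℕ)] '' Ik)
      (fun j : Fin (qd k) => f^[(j : ℕ)] '' Ik1)) :
    (⋃ i, P i) = Set.univ ∧
      Pairwise fun i j => Disjoint (interior (P i)) (interior (P j)) :=
  dynamical_partition_general f F hlift hmono hsurj hper ρ hirr hρ hrot a qd hdig hq0 hq1 hqrec k x
    Ik Ik1 hIk hIknot hIk1 hIk1not P hP
end
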